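/- arXiv:cs/9906013 — 2 statements merged into one kernel-verified Lean document; each statement's English description precedes it below -/
import Mathlib

section
/- If the arity function is compatible with the ordering on the type alphabet, then the subtype relation on types is transitive: ρ ≤ σ and σ ≤ τ imply ρ ≤ τ. -/
/-! Induct on the derivation of `ρ ≤ σ`. In the constructor case `K(ss) ≤ L(ts) ≤ M(us)`,
compatibility of the arity gives `min (ar K) (ar M) ≤ ar L`, so every argument position shared by
`ss` and `us` also exists in `ts`, and the induction hypothesis applies there. -/

/-- Types over a type alphabet `C`: type parameters (indexed by `ℕ`) and
applications of type constructors to lists of types. -/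
inductive Ty (C : Type) where
  | param : ℕ → Ty C
  | con : C → List (Ty C) → Ty C

/-- The subtype relation on types: `α ≤ α` for parameters, and
`K(σ₁,…,σ_m) ≤ L(τ₁,…,τ_n)` iff `K ≤ L` and `σ_i ≤ τ_i` for all `i < min m n`. -/
inductive Subty {C : Type} [LE C] : Ty C → Ty C → Prop where
  | param (n : ℕ) : Subty (.param n) (.param n)
  | con {K L : C} {ss ts : List (Ty C)} :
      K ≤ L →
      (∀ i (h1 : i < ss.length) (h2 : i < ts.length), Subty ss[i] ts[i]) →
      Subty (.con K ss) (.con L ts)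

/-- Well-formed types with respect to an arity function `ar`:
every constructor is applied to exactly `ar K` arguments. -/
inductive WF {C : Type} (ar : C → ℕ) : Ty C → Prop where
  | param (n : ℕ) : WF ar (.param n)
  | con {K : C} {ss : List (Ty C)} :
      ss.length = ar K → (∀ σ ∈ ss, WF ar σ) → WF ar (.con K ss)

/-- The arity function is compatible with the ordering on the type alphabet. -/
def Compatible {C : Type} [LE C] (ar : C → ℕ) : Prop :=
  ∀ K L M : C, K ≤ L → L ≤ M → min (ar K) (ar M) ≤ ar L

theorem WF.length_eq {C : Type} {ar : C → ℕ} {K : C} {ss : List (Ty C)}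
    (h : WF ar (.con K ss)) : ss.length = ar K := by
  cases h with
  | con hlen _ => exact hlen

theorem WF.of_mem {C : Type} {ar : C → ℕ} {K : C} {ss : List (Ty C)} {σ : Ty C}
    (h : WF ar (.con K ss)) (hσ : σ ∈ ss) : WF ar σ := by
  cases h with
  | con _ hargs => exact hargs σ hσ

theorem Compatible.lt_length_middle {C : Type} [Preorder C] {ar : C → ℕ}
    (hcompat : Compatible ar) {K L M : C} (hKL : K ≤ L) (hLM : L ≤ M)
    {ss ts us : List (Ty C)} (hss : ss.length = ar K) (hts : ts.length = ar L)
    (hus : us.length = ar M) {i : ℕ} (hi₁ : i < ss.length) (hi₃ : i < us.length) :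
    i < ts.length :=
  calc i < min ss.length us.length := lt_min hi₁ hi₃
    _ = min (ar K) (ar M) := by rw [hss, hus]
    _ ≤ ar L := hcompat K L M hKL hLM
    _ = ts.length := hts.symm

/-- if the arity function is compatible with the ordering,
then the subtype relation on types is transitive. -/
theorem subty_trans {C : Type} [PartialOrder C] (ar : C → ℕ)
    (hcompat : Compatible ar)
    (ρ σ τ : Ty C) (hρ : WF ar ρ) (hσ : WF ar σ) (hτ : WF ar τ)
    (h1 : Subty ρ σ) (h2 : Subty σ τ) : Subty ρ τ := by
  induction h1 generalizing τ with
  | param n => exact h2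
  | @con K L ss ts hKL _ ih =>
    cases h2 with
    | @con _ M _ us hLM hargs₂ =>
      refine .con (hKL.trans hLM) fun i hi₁ hi₃ => ?_
      have hi₂ : i < ts.length := hcompat.lt_length_middle hKL hLM
        hρ.length_eq hσ.length_eq hτ.length_eq hi₁ hi₃
      exact ih i hi₁ hi₂ us[i] (hρ.of_mem (List.getElem_mem hi₁))
        (hσ.of_mem (List.getElem_mem hi₂)) (hτ.of_mem (List.getElem_mem hi₃))
        (hargs₂ i hi₂ hi₃)
end

section
/- If the arity function is compatible with the ordering, then the set of types T(A, P) with the subtype relation forms a partial order. -/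
namespace Subty

variable {C : Type}

theorem refl [Preorder C] : ∀ σ : Ty C, Subty σ σ
  | .param n => .param n
  | .con _ ss => .con le_rfl fun i h _ =>
      have := List.sizeOf_lt_of_mem (List.getElem_mem h)
      refl ss[i]

theorem antisymm [PartialOrder C] {ar : C → ℕ} {σ τ : Ty C} (hστ : Subty σ τ) (hτσ : Subty τ σ)
    (hσ : WF ar σ) (hτ : WF ar τ) : σ = τ := by
  induction hστ with
  | param n => rfl
  | @con K L ss ts hKL _ ih =>
    obtain _ | ⟨hLK, hts⟩ := hτσ
    obtain _ | ⟨hss_len, hss⟩ := hσ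
    obtain _ | ⟨hts_len, hts_wf⟩ := hτ
    obtain rfl : K = L := le_antisymm hKL hLK
    have hlen : ss.length = ts.length := hss_len.trans hts_len.symm
    congr 1
    exact List.ext_getElem hlen fun i h₁ h₂ =>
      ih i h₁ h₂ (hts i h₂ h₁) (hss _ (List.getElem_mem h₁)) (hts_wf _ (List.getElem_mem h₂))

theorem trans [Preorder C] {ar : C → ℕ} (hcompat : Compatible ar) {ρ σ τ : Ty C}
    (hρσ : Subty ρ σ) (hστ : Subty σ τ) (hρ : WF ar ρ) (hσ : WF ar σ) (hτ : WF ar τ) :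
    Subty ρ τ := by
  induction hρσ generalizing τ with
  | param n => exact hστ
  | @con K L ss ts hKL _ ih =>
    obtain _ | @⟨_, M, _, us, hLM, htu⟩ := hστ
    obtain _ | ⟨hss_len, hss⟩ := hρ
    obtain _ | ⟨hts_len, hts⟩ := hσ
    obtain _ | ⟨hus_len, hus⟩ := hτ
    refine .con (hKL.trans hLM) fun i h₁ h₃ => ?_
    -- compatibility is exactly what makes the middle argument `ts[i]` exist
    have h₂ : i < ts.length := by
      have := hcompat K L M hKL hLM
      omega
    exact ih i h₁ h₂ (htu i h₂ h₃) (hss _ (List.getElem_mem h₁)) (hts _ (List.getElem_mem h₂))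
      (hus _ (List.getElem_mem h₃))

end Subty

/-- if the arity function is compatible with the ordering, then
the set of (well-formed) types together with the subtype relation is a partial
order, i.e. the subtype relation is reflexive, antisymmetric and transitive. -/
theorem subty_partialOrder {C : Type} [PartialOrder C] (ar : C → ℕ)
    (hcompat : Compatible ar) :
    (∀ σ : Ty C, WF ar σ → Subty σ σ) ∧
    (∀ σ τ : Ty C, WF ar σ → WF ar τ → Subty σ τ → Subty τ σ → σ = τ) ∧
    (∀ ρ σ τ : Ty C, WF ar ρ → WF ar σ → WF ar τ →
      Subty ρ σ → Subty σ τ → Subty ρ τ) :=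
  ⟨fun σ _ => Subty.refl σ,
    fun _ _ hσ hτ hστ hτσ => hστ.antisymm hτσ hσ hτ,
    fun _ _ _ hρ hσ hτ hρσ hστ => hρσ.trans hcompat hστ hρ hσ hτ⟩
end
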